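/- arXiv:2112.15347 — 5 statements merged into one kernel-verified Lean document; each statement's English description precedes it below -/
import Mathlib

section
/- Let β > 0, γ ≥ 0, let λ be a nonzero real number, and let x₀ ∈ ℝ satisfy 1 + γλe^{x₀} > 0 and β + λe^{x₀} > 0. Then for every w = x + iy ∈ ℂ with x ≤ x₀ and |y| < π/2: the complex numbers 1 + γλe^{w} and β + λe^{w} both have positive real part, and, with ln denoting the principal branch of the complex logarithm, Re ln((1+γλe^{w})/(β+λe^{w})) = (1/2)·ln((1 + γ²λ²e^{2x} + 2γλe^{x}cos y)/(β² + λ²e^{2x} + 2βλe^{x}cos y)) and |Im ln((1+γλe^{w})/(β+λe^{w}))| = arctan(|(βγ−1)λe^{x}sin y| / (β + γλ²e^{2x} + (βγ+1)λe^{x}cos y)). -/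
/-!
The real part of the principal logarithm is `log ‖·‖ = ½ log normSq`, and `normSq` is
multiplicative. For the imaginary part, `arg (A / B) = arg (A * conj B)` since the two differ by the
positive factor `normSq B`, and `Re (A * conj B) = Re A Re B + γ (λ Im eʷ)² > 0`; an argument in
`(-π/2, π/2)` is the arctangent of `Im / Re`. Positivity of `Re A` and `Re B` holds because both
are affine in `t = eˣ cos y ∈ [0, e^{x₀}]` and positive at the two endpoints.
-/

open Real Complex ComplexConjugate

lemma pos_add_mul_of_le {a k t T : ℝ} (ha : 0 < a) (hT : 0 < a + k * T) (ht₀ : 0 ≤ t)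
    (htT : t ≤ T) : 0 < a + k * t := by
  rcases le_or_gt 0 k with hk | hk
  · nlinarith [mul_nonneg hk ht₀]
  · nlinarith [mul_le_mul_of_nonpos_left htT hk.le]

lemma Real.abs_arctan (t : ℝ) : |arctan t| = arctan |t| := by
  rcases le_or_gt 0 t with ht | ht
  · rw [abs_of_nonneg ht, abs_of_nonneg (arctan_nonneg.2 ht)]
  · rw [abs_of_neg ht, abs_of_neg (arctan_lt_zero.2 ht), arctan_neg]

namespace Complex

lemma log_re_eq_half_log_normSq (z : ℂ) : (log z).re = 1 / 2 * Real.log (normSq z) := by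
  rw [log_re, norm_def, Real.log_sqrt (normSq_nonneg z)]
  ring

lemma arg_eq_arctan_of_re_pos {z : ℂ} (hz : 0 < z.re) : arg z = Real.arctan (z.im / z.re) := by
  have h := abs_lt.1 (abs_arg_lt_pi_div_two_iff.2 (Or.inl hz))
  rw [← tan_arg, Real.arctan_tan h.1 h.2]

lemma arg_div_eq_arg_mul_conj {a b : ℂ} (hb : b ≠ 0) : arg (a / b) = arg (a * conj b) := by
  rw [div_eq_mul_inv, inv_def, ← mul_assoc, arg_mul_real (inv_pos.2 (normSq_pos.2 hb))]

lemma normSq_exp (z : ℂ) : normSq (exp z) = Real.exp (2 * z.re) := by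
  rw [normSq_eq_norm_sq, norm_exp, ← Real.exp_nat_mul]
  push_cast
  rfl

section Affine

variable (a k b l : ℝ) (z : ℂ)

lemma normSq_ofReal_add_ofReal_mul :
    normSq (a + k * z) = a ^ 2 + k ^ 2 * normSq z + 2 * a * k * z.re := by
  simp only [normSq_apply, add_re, add_im, ofReal_re, ofReal_im, mul_re, mul_im]
  ring

lemma re_ofReal_add_ofReal_mul_mul_conj :
    ((a + k * z) * conj (b + l * z)).re = a * b + (a * l + b * k) * z.re + k * l * normSq z := by
  simp only [normSq_apply, mul_re, mul_im, conj_re, conj_im, add_re, add_im, ofReal_re,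
    ofReal_im]
  ring

lemma im_ofReal_add_ofReal_mul_mul_conj :
    ((a + k * z) * conj (b + l * z)).im = (k * b - a * l) * z.im := by
  simp only [mul_re, mul_im, conj_re, conj_im, add_re, add_im, ofReal_re, ofReal_im]
  ring

end Affine

lemma re_ofReal_add_ofReal_mul_exp_pos {a k x₀ : ℝ} {w : ℂ} (ha : 0 < a)
    (hx₀ : 0 < a + k * Real.exp x₀) (hx : w.re ≤ x₀) (hy : |w.im| < π / 2) :
    0 < ((a : ℂ) + k * exp w).re := by
  have hcos : 0 < Real.cos w.im := cos_pos_of_mem_Ioo (abs_lt.1 hy)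
  rw [add_re, ofReal_re, re_ofReal_mul, exp_re]
  refine pos_add_mul_of_le ha hx₀ (by positivity) ?_
  exact (mul_le_of_le_one_right (Real.exp_pos _).le (cos_le_one _)).trans (exp_le_exp.2 hx)

end Complex

theorem re_im_log_ratio_general
    (β γ lam : ℝ) (hβ : 0 < β) (hγ : 0 ≤ γ)
    (x₀ : ℝ) (h₁ : 0 < 1 + γ * lam * Real.exp x₀) (h₂ : 0 < β + lam * Real.exp x₀)
    (x y : ℝ) (hx : x ≤ x₀) (hy : |y| < Real.pi / 2) :
    0 < (1 + (γ : ℂ) * (lam : ℂ) * Complex.exp ((x : ℂ) + (y : ℂ) * Complex.I)).re ∧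
    0 < ((β : ℂ) + (lam : ℂ) * Complex.exp ((x : ℂ) + (y : ℂ) * Complex.I)).re ∧
    (Complex.log ((1 + (γ : ℂ) * (lam : ℂ) * Complex.exp ((x : ℂ) + (y : ℂ) * Complex.I)) /
        ((β : ℂ) + (lam : ℂ) * Complex.exp ((x : ℂ) + (y : ℂ) * Complex.I)))).re =
      (1 / 2) * Real.log
        ((1 + γ ^ 2 * lam ^ 2 * Real.exp (2 * x) + 2 * γ * lam * Real.exp x * Real.cos y) /
         (β ^ 2 + lam ^ 2 * Real.exp (2 * x) + 2 * β * lam * Real.exp x * Real.cos y)) ∧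
    |(Complex.log ((1 + (γ : ℂ) * (lam : ℂ) * Complex.exp ((x : ℂ) + (y : ℂ) * Complex.I)) /
        ((β : ℂ) + (lam : ℂ) * Complex.exp ((x : ℂ) + (y : ℂ) * Complex.I)))).im| =
      Real.arctan (|(β * γ - 1) * lam * Real.exp x * Real.sin y| /
        (β + γ * lam ^ 2 * Real.exp (2 * x) + (β * γ + 1) * lam * Real.exp x * Real.cos y)) := by
  set E := Complex.exp ((x : ℂ) + (y : ℂ) * Complex.I)
  set A := 1 + (γ : ℂ) * lam * E
  set B := (β : ℂ) + lam * E
  have hA : A = ((1 : ℝ) : ℂ) + ((γ * lam : ℝ) : ℂ) * E := by push_cast; rfl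
  have hre : E.re = Real.exp x * Real.cos y := by simp [E, Complex.exp_re]
  have him : E.im = Real.exp x * Real.sin y := by simp [E, Complex.exp_im]
  have hnorm : normSq E = Real.exp (2 * x) := by simp [E, Complex.normSq_exp]
  have hApos : 0 < A.re :=
    hA ▸ re_ofReal_add_ofReal_mul_exp_pos one_pos h₁ (by simpa using hx) (by simpa using hy)
  have hBpos : 0 < B.re :=
    re_ofReal_add_ofReal_mul_exp_pos hβ h₂ (by simpa using hx) (by simpa using hy)
  have hB : B ≠ 0 := fun h => by simp [h] at hBpos
  have hDpos : 0 < (A * conj B).re := by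
    have hD : (A * conj B).re = A.re * B.re + γ * (lam * E.im) ^ 2 := by
      simp only [A, B, mul_re, mul_im, conj_re, conj_im, add_re, add_im, one_re, one_im,
        ofReal_re, ofReal_im]
      ring
    rw [hD]; positivity
  refine ⟨hApos, hBpos, ?_, ?_⟩
  · rw [log_re_eq_half_log_normSq, map_div₀, hA, normSq_ofReal_add_ofReal_mul,
      normSq_ofReal_add_ofReal_mul, hre, hnorm]
    ring_nf
  · rw [log_im, arg_div_eq_arg_mul_conj hB, arg_eq_arctan_of_re_pos hDpos, abs_arctan, abs_div,
      abs_of_pos hDpos, hA, re_ofReal_add_ofReal_mul_mul_conj, im_ofReal_add_ofReal_mul_mul_conj,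
      hre, him, hnorm]
    ring_nf

/-- Closed form of the real and imaginary parts of `ln((1+γλe^w)/(β+λe^w))` for
`w = x + iy` with `x ≤ x₀` and `|y| < π/2`, where `1 + γλe^{x₀} > 0` and
`β + λe^{x₀} > 0`. -/
theorem re_im_log_ratio
    (β γ lam : ℝ) (hβ : 0 < β) (hγ : 0 ≤ γ) (hlam : lam ≠ 0)
    (x₀ : ℝ) (h₁ : 0 < 1 + γ * lam * Real.exp x₀) (h₂ : 0 < β + lam * Real.exp x₀)
    (x y : ℝ) (hx : x ≤ x₀) (hy : |y| < Real.pi / 2) :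
    0 < (1 + (γ : ℂ) * (lam : ℂ) * Complex.exp ((x : ℂ) + (y : ℂ) * Complex.I)).re ∧
    0 < ((β : ℂ) + (lam : ℂ) * Complex.exp ((x : ℂ) + (y : ℂ) * Complex.I)).re ∧
    (Complex.log ((1 + (γ : ℂ) * (lam : ℂ) * Complex.exp ((x : ℂ) + (y : ℂ) * Complex.I)) /
        ((β : ℂ) + (lam : ℂ) * Complex.exp ((x : ℂ) + (y : ℂ) * Complex.I)))).re =
      (1 / 2) * Real.log
        ((1 + γ ^ 2 * lam ^ 2 * Real.exp (2 * x) + 2 * γ * lam * Real.exp x * Real.cos y) /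
         (β ^ 2 + lam ^ 2 * Real.exp (2 * x) + 2 * β * lam * Real.exp x * Real.cos y)) ∧
    |(Complex.log ((1 + (γ : ℂ) * (lam : ℂ) * Complex.exp ((x : ℂ) + (y : ℂ) * Complex.I)) /
        ((β : ℂ) + (lam : ℂ) * Complex.exp ((x : ℂ) + (y : ℂ) * Complex.I)))).im| =
      Real.arctan (|(β * γ - 1) * lam * Real.exp x * Real.sin y| /
        (β + γ * lam ^ 2 * Real.exp (2 * x) + (β * γ + 1) * lam * Real.exp x * Real.cos y)) :=
  re_im_log_ratio_general β γ lam hβ hγ x₀ h₁ h₂ x y hx hy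
end

section
/- Let β > 0 and γ ≥ 0 with βγ < 1, and set d̄ := (1+√(βγ))/(1−√(βγ)). If β ≤ 1, then the function d ↦ λ_c(d) is strictly decreasing on (d̄, +∞). If β > 1, then there exists d_c > d̄ such that d ↦ λ_c(d) is strictly decreasing on (d̄, d_c) and strictly increasing on (d_c, +∞). -/
/-!
Write `x = x̂_d`. It is the smaller root of `γ x² - (d (1 - βγ) - 1 - βγ) x + β`, so
`d = xhatInv x = (x + β)(γ x + 1) / ((1 - βγ) x)`, a strictly decreasing function of `x` on
`xDom = {x > 0, γ x² < β}` with values above `d̄`. Hence `λ_c(d) = exp (logLamC x̂_d)` with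
`logLamC x = log x + xhatInv x · log ((x + β)/(γ x + 1))` is monotone in `d` in the direction
opposite to that of `logLamC` in `x`. Since `xhatInv x · (log ((x + β)/(γ x + 1)))' = 1 / x`,
the derivative of `logLamC` is `crit x / ((1 - βγ) x²)`. For `β ≤ 1`, `crit > 0` on `xDom`.
For `β > 1`, `crit` is strictly increasing, `crit 0 = -β log β < 0`, and `crit` is positive at
the end of `xDom`, so it vanishes at a single `x_c`, and `d_c = xhatInv x_c`.
-/

/-- `x̂_d` for two-spin parameters `β, γ`. -/
noncomputable def xhat (β γ d : ℝ) : ℝ :=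
  if γ = 0 then β / (d - 1)
  else (-1 - β * γ + d * (1 - β * γ) -
    Real.sqrt ((-1 - β * γ + d * (1 - β * γ)) ^ 2 - 4 * (β * γ))) / (2 * γ)

/-- The critical activity `λ_c(d) = x̂_d ((x̂_d + β)/(γ x̂_d + 1))^d`. -/
noncomputable def lamC (β γ d : ℝ) : ℝ :=
  xhat β γ d * ((xhat β γ d + β) / (γ * xhat β γ d + 1)) ^ d

open Real Set

noncomputable def dbar (β γ : ℝ) : ℝ := (1 + √(β * γ)) / (1 - √(β * γ))

-- The range of `x̂` on `(d̄, ∞)`.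
def xDom (β γ : ℝ) : Set ℝ := {x | 0 < x ∧ γ * x ^ 2 < β}

noncomputable def xhatInv (β γ x : ℝ) : ℝ := (x + β) * (γ * x + 1) / ((1 - β * γ) * x)

noncomputable def logLamC (β γ x : ℝ) : ℝ :=
  log x + xhatInv β γ x * log ((x + β) / (γ * x + 1))

noncomputable def crit (β γ x : ℝ) : ℝ :=
  2 * (1 - β * γ) * x + (γ * x ^ 2 - β) * log ((x + β) / (γ * x + 1))

section

variable {β γ x d : ℝ}

lemma isOpen_xDom : IsOpen (xDom β γ) :=
  (isOpen_lt continuous_const continuous_id).inter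
    (isOpen_lt (continuous_const.mul (continuous_pow 2)) continuous_const)

lemma convex_xDom (hγ : 0 ≤ γ) : Convex ℝ (xDom β γ) :=
  Set.OrdConnected.convex ⟨fun _ hx _ hy _ hz =>
    ⟨hx.1.trans_le hz.1, lt_of_le_of_lt (by gcongr; exacts [(hx.1.trans_le hz.1).le, hz.2]) hy.2⟩⟩

lemma hasDerivAt_log_ratio (hxβ : 0 < x + β) (hγx : 0 < γ * x + 1) :
    HasDerivAt (fun y => log ((y + β) / (γ * y + 1)))
      ((1 - β * γ) / ((x + β) * (γ * x + 1))) x :=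
  ((((hasDerivAt_id' x).add_const β).div (((hasDerivAt_id' x).const_mul γ).add_const 1)
    hγx.ne').log (div_pos hxβ hγx).ne').congr_deriv
      (by simp only [Pi.div_apply]; field_simp; ring)

lemma hasDerivAt_crit (hxβ : 0 < x + β) (hγx : 0 < γ * x + 1) :
    HasDerivAt (crit β γ)
      (2 * (1 - β * γ) + 2 * γ * x * log ((x + β) / (γ * x + 1)) +
        (γ * x ^ 2 - β) * (1 - β * γ) / ((x + β) * (γ * x + 1))) x :=
  (((hasDerivAt_id' x).const_mul (2 * (1 - β * γ))).add
    ((((hasDerivAt_pow 2 x).const_mul γ).sub_const β).mul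
      (hasDerivAt_log_ratio hxβ hγx))).congr_deriv (by ring)

lemma hasDerivAt_logLamC (hβ : 0 < β) (hγ : 0 ≤ γ) (hβγ : β * γ < 1) (hx : 0 < x) :
    HasDerivAt (logLamC β γ) (crit β γ x / ((1 - β * γ) * x ^ 2)) x := by
  have hxβ : 0 < x + β := by positivity
  have hγx : 0 < γ * x + 1 := by positivity
  have hγβ : 1 - γ * β ≠ 0 := by linarith [mul_comm β γ]
  have hD : HasDerivAt (xhatInv β γ) ((γ * x ^ 2 - β) / ((1 - β * γ) * x ^ 2)) x :=
    ((((hasDerivAt_id' x).add_const β).mul (((hasDerivAt_id' x).const_mul γ).add_const 1)).div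
      ((hasDerivAt_id' x).const_mul (1 - β * γ)) (by positivity)).congr_deriv
      (by simp only [Pi.mul_apply]; field_simp; ring)
  refine ((hasDerivAt_log hx.ne').add (hD.mul (hasDerivAt_log_ratio hxβ hγx))).congr_deriv ?_
  rw [crit, xhatInv]
  field_simp
  ring

lemma crit_pos (hβ1 : β ≤ 1) (hγ : 0 ≤ γ) (hβγ : β * γ < 1) (hx : x ∈ xDom β γ) :
    0 < crit β γ x := by
  obtain ⟨hx0, hxβ⟩ := hx
  have hβ : 0 < β := by nlinarith [mul_nonneg hγ (sq_nonneg x)]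
  have hγx : 0 < γ * x + 1 := by positivity
  have hR : 0 < (x + β) / (γ * x + 1) := by positivity
  have hlin : 0 < 2 * (1 - β * γ) * x := by nlinarith
  rw [crit]
  rcases le_or_gt (log ((x + β) / (γ * x + 1))) 0 with hL | hL
  · nlinarith
  -- `log R ≤ R - 1 ≤ (1 - γ) x` bounds the logarithmic term by `β (1 - γ) x ≤ (1 - β γ) x`.
  have hR1 : (x + β) / (γ * x + 1) - 1 ≤ (1 - γ) * x := by
    rw [div_sub_one hγx.ne', div_le_iff₀ hγx]
    nlinarith [mul_nonneg hγ (sq_nonneg x)]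
  have hlog := (log_le_sub_one_of_pos hR).trans hR1
  have hγ1 : 0 ≤ 1 - γ := by
    by_contra! h
    nlinarith
  nlinarith [mul_le_mul_of_nonneg_left hlog (by linarith : 0 ≤ β - γ * x ^ 2),
    mul_nonneg hγ (sq_nonneg x), mul_nonneg hγ1 hx0.le]

lemma crit_strictMonoOn (hβ1 : 1 < β) (hγ : 0 ≤ γ) (hβγ : β * γ < 1) :
    StrictMonoOn (crit β γ) (xDom β γ) := by
  have hderiv {x : ℝ} (hx : 0 < x) := hasDerivAt_crit (β := β) (γ := γ) (x := x)
    (by linarith) (by positivity)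
  refine strictMonoOn_of_deriv_pos (convex_xDom hγ)
    (fun x hx => (hderiv hx.1).continuousAt.continuousWithinAt) fun x hx => ?_
  rw [isOpen_xDom.interior_eq] at hx
  obtain ⟨hx0, hxβ⟩ := hx
  have hγx : 0 < γ * x + 1 := by positivity
  have hγ1 : γ < 1 := by nlinarith
  have hL : 0 ≤ log ((x + β) / (γ * x + 1)) :=
    log_nonneg ((one_le_div hγx).2 (by nlinarith))
  have hfrac : -(1 - β * γ) < (γ * x ^ 2 - β) * (1 - β * γ) / ((x + β) * (γ * x + 1)) := by
    rw [lt_div_iff₀ (by positivity)]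
    nlinarith [mul_nonneg hγ (sq_nonneg x), mul_nonneg (mul_nonneg hγ hx0.le) (by linarith : 0 ≤ β)]
  rw [(hderiv hx0).deriv]
  have : 0 ≤ 2 * γ * x * log ((x + β) / (γ * x + 1)) := by positivity
  linarith

lemma exists_crit_pos (hβ1 : 1 < β) (hγ : 0 ≤ γ) (hβγ : β * γ < 1) :
    ∃ X, 0 < X ∧ Ioo 0 X ⊆ xDom β γ ∧ 0 < crit β γ X := by
  have hβ : 0 < β := by linarith
  rcases hγ.eq_or_lt with rfl | hγ0
  · -- `log (X + β) ≤ log β + X / β` makes `crit` at least `X - β log β`.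
    have hlogβ : 0 < log β := log_pos hβ1
    refine ⟨β * log β + 1, by positivity, fun x hx => ⟨hx.1, by simpa using hβ⟩, ?_⟩
    have hX : log ((β * log β + 1 + β) / β) ≤ (β * log β + 1 + β) / β - 1 :=
      log_le_sub_one_of_pos (by positivity)
    rw [log_div (by positivity) hβ.ne', div_sub_one hβ.ne', le_div_iff₀ hβ] at hX
    simp only [crit, zero_mul, mul_zero, sub_zero, zero_add, zero_sub, div_one]
    nlinarith
  · have hX : γ * √(β / γ) ^ 2 = β := by rw [sq_sqrt (by positivity)]; field_simp
    refine ⟨√(β / γ), by positivity, fun x hx => ⟨hx.1, ?_⟩, ?_⟩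
    · calc γ * x ^ 2 < γ * √(β / γ) ^ 2 := by gcongr; exacts [hx.1.le, hx.2]
        _ = β := hX
    · rw [crit, hX, sub_self, zero_mul, add_zero]
      have : 0 < 1 - β * γ := by linarith
      positivity

lemma exists_crit_eq_zero (hβ1 : 1 < β) (hγ : 0 ≤ γ) (hβγ : β * γ < 1) :
    ∃ xc ∈ xDom β γ, crit β γ xc = 0 := by
  obtain ⟨X, hX0, hXdom, hXcrit⟩ := exists_crit_pos hβ1 hγ hβγ
  have hcrit0 : crit β γ 0 < 0 := by
    simpa [crit] using mul_pos (by linarith : (0:ℝ) < β) (log_pos hβ1)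
  have hcont : ContinuousOn (crit β γ) (Icc 0 X) := fun x hx =>
    (hasDerivAt_crit (by linarith [hx.1]) (by nlinarith [hx.1])).continuousAt.continuousWithinAt
  obtain ⟨xc, hxc, hzero⟩ := intermediate_value_Ioo hX0.le hcont ⟨hcrit0, hXcrit⟩
  exact ⟨xc, hXdom hxc, hzero⟩

lemma xhat_spec_of_gamma_pos (hβ : 0 < β) (hγ : 0 < γ) (hβγ : β * γ < 1) (hd : dbar β γ < d) :
    xhat β γ d ∈ xDom β γ ∧ xhatInv β γ (xhat β γ d) = d := by
  set s := √(β * γ)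
  have hs0 : 0 < s := sqrt_pos.2 (by positivity)
  have hs2 : s ^ 2 = β * γ := sq_sqrt (by positivity)
  have hs1 : s < 1 := by nlinarith
  set a := -1 - β * γ + d * (1 - β * γ)
  have ha : 2 * s < a := by
    rw [dbar, div_lt_iff₀ (by linarith)] at hd
    nlinarith
  have hdisc : 0 < a ^ 2 - 4 * (β * γ) := by nlinarith
  set q := √(a ^ 2 - 4 * (β * γ))
  have hq0 : 0 < q := sqrt_pos.2 hdisc
  have hq2 : q ^ 2 = a ^ 2 - 4 * (β * γ) := sq_sqrt hdisc.le
  have hqa : q < a := by nlinarith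
  set x := xhat β γ d
  have hx : 2 * γ * x = a - q := by
    rw [show x = (a - q) / (2 * γ) from if_neg hγ.ne']
    field_simp
  have hroot : γ * x ^ 2 - a * x + β = 0 := by
    have : 4 * γ * (γ * x ^ 2 - a * x + β) = 0 := by
      linear_combination (2 * γ * x - a - q) * hx + hq2
    simpa [hγ.ne'] using this
  -- `x` is the smaller root: its distance `q / γ` to the other one gives `γ x² < β`.
  have hqx : q * x = β - γ * x ^ 2 := by
    have : 2 * γ * (q * x - (β - γ * x ^ 2)) = 0 := by
      linear_combination 2 * γ * hroot + (a + q) * hx - hq2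
    linarith [(mul_eq_zero.1 this).resolve_left (by positivity)]
  have hx0 : 0 < x := by nlinarith
  refine ⟨⟨hx0, by nlinarith⟩, ?_⟩
  rw [xhatInv, div_eq_iff (by nlinarith)]
  linear_combination hroot

lemma xhat_spec (hβ : 0 < β) (hγ : 0 ≤ γ) (hβγ : β * γ < 1) (hd : dbar β γ < d) :
    xhat β γ d ∈ xDom β γ ∧ xhatInv β γ (xhat β γ d) = d := by
  rcases hγ.eq_or_lt with rfl | hγ0
  · have hd1 : 0 < d - 1 := by simpa [dbar] using hd
    simp only [xhat, xhatInv, xDom, if_pos]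
    refine ⟨⟨by positivity, by simpa using hβ⟩, ?_⟩
    field_simp
    ring
  · exact xhat_spec_of_gamma_pos hβ hγ0 hβγ hd

lemma xhatInv_strictAntiOn (hγ : 0 ≤ γ) (hβγ : β * γ < 1) :
    StrictAntiOn (xhatInv β γ) (xDom β γ) := by
  rintro x ⟨hx0, -⟩ y ⟨hy0, hyβ⟩ hxy
  have hβγ' : 0 < 1 - β * γ := by linarith
  have hγxy : γ * (x * y) < β := by
    nlinarith [mul_nonneg hγ (mul_nonneg hy0.le (sub_nonneg.2 hxy.le))]
  rw [xhatInv, xhatInv, div_lt_div_iff₀ (by positivity) (by positivity)]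
  nlinarith [mul_pos (mul_pos hx0 hy0) hβγ', mul_pos (sub_pos.2 hxy) (sub_pos.2 hγxy)]

lemma dbar_lt_xhatInv (hγ : 0 ≤ γ) (hβγ : β * γ < 1) (hx : x ∈ xDom β γ) :
    dbar β γ < xhatInv β γ x := by
  obtain ⟨hx0, hxβ⟩ := hx
  have hβ : 0 < β := by nlinarith [mul_nonneg hγ (sq_nonneg x)]
  set s := √(β * γ)
  have hs2 : s ^ 2 = β * γ := sq_sqrt (by positivity)
  have hs1 : s < 1 := by nlinarith [sqrt_nonneg (β * γ)]
  -- AM-GM: `2 s x < γ x² + β`, strictly because `γ x² ≠ β`.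
  have hamgm : 2 * s * x < γ * x ^ 2 + β := by
    nlinarith [mul_nonneg hγ (sq_nonneg x), sq_nonneg (γ * x ^ 2 - β)]
  rw [dbar, xhatInv, div_lt_div_iff₀ (by linarith) (by nlinarith)]
  nlinarith

lemma xhat_strictAntiOn (hβ : 0 < β) (hγ : 0 ≤ γ) (hβγ : β * γ < 1) :
    StrictAntiOn (xhat β γ) (Ioi (dbar β γ)) := by
  intro d₁ hd₁ d₂ hd₂ hd
  obtain ⟨hx₁, hinv₁⟩ := xhat_spec hβ hγ hβγ hd₁
  obtain ⟨hx₂, hinv₂⟩ := xhat_spec hβ hγ hβγ hd₂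
  rwa [← (xhatInv_strictAntiOn hγ hβγ).lt_iff_gt hx₁ hx₂, hinv₁, hinv₂]

lemma lamC_eq_exp_logLamC (hβ : 0 < β) (hγ : 0 ≤ γ) (hβγ : β * γ < 1) (hd : dbar β γ < d) :
    lamC β γ d = exp (logLamC β γ (xhat β γ d)) := by
  obtain ⟨⟨hx0, -⟩, hinv⟩ := xhat_spec hβ hγ hβγ hd
  rw [logLamC, hinv, exp_add, exp_log hx0, mul_comm d, ← rpow_def_of_pos (by positivity), lamC]

lemma logLamC_strictMonoOn (hβ : 0 < β) (hγ : 0 ≤ γ) (hβγ : β * γ < 1) {s : Set ℝ}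
    (hs : Convex ℝ s) (hso : IsOpen s) (hs0 : s ⊆ Ioi 0) (hcrit : ∀ x ∈ s, 0 < crit β γ x) :
    StrictMonoOn (logLamC β γ) s := by
  have hderiv {x : ℝ} (hx : x ∈ s) := hasDerivAt_logLamC hβ hγ hβγ (hs0 hx)
  refine strictMonoOn_of_deriv_pos hs (fun x hx => (hderiv hx).continuousAt.continuousWithinAt)
    fun x hx => ?_
  rw [hso.interior_eq] at hx
  have : 0 < 1 - β * γ := by linarith
  have : 0 < x := hs0 hx
  rw [(hderiv hx).deriv]
  exact div_pos (hcrit x hx) (by positivity)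

lemma logLamC_strictAntiOn (hβ : 0 < β) (hγ : 0 ≤ γ) (hβγ : β * γ < 1) {s : Set ℝ}
    (hs : Convex ℝ s) (hso : IsOpen s) (hs0 : s ⊆ Ioi 0) (hcrit : ∀ x ∈ s, crit β γ x < 0) :
    StrictAntiOn (logLamC β γ) s := by
  have hderiv {x : ℝ} (hx : x ∈ s) := hasDerivAt_logLamC hβ hγ hβγ (hs0 hx)
  refine strictAntiOn_of_deriv_neg hs (fun x hx => (hderiv hx).continuousAt.continuousWithinAt)
    fun x hx => ?_
  rw [hso.interior_eq] at hx
  have : 0 < 1 - β * γ := by linarith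
  have : 0 < x := hs0 hx
  rw [(hderiv hx).deriv]
  exact div_neg_of_neg_of_pos (hcrit x hx) (by positivity)

lemma lamC_strictAntiOn_of_logLamC (hβ : 0 < β) (hγ : 0 ≤ γ) (hβγ : β * γ < 1) {I T : Set ℝ}
    (hI : I ⊆ Ioi (dbar β γ)) (hIT : MapsTo (xhat β γ) I T)
    (hmono : StrictMonoOn (logLamC β γ) T) : StrictAntiOn (lamC β γ) I := by
  intro d₁ hd₁ d₂ hd₂ hd
  rw [lamC_eq_exp_logLamC hβ hγ hβγ (hI hd₁), lamC_eq_exp_logLamC hβ hγ hβγ (hI hd₂), exp_lt_exp]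
  exact hmono (hIT hd₂) (hIT hd₁) (xhat_strictAntiOn hβ hγ hβγ (hI hd₁) (hI hd₂) hd)

lemma lamC_strictMonoOn_of_logLamC (hβ : 0 < β) (hγ : 0 ≤ γ) (hβγ : β * γ < 1) {I T : Set ℝ}
    (hI : I ⊆ Ioi (dbar β γ)) (hIT : MapsTo (xhat β γ) I T)
    (hanti : StrictAntiOn (logLamC β γ) T) : StrictMonoOn (lamC β γ) I := by
  intro d₁ hd₁ d₂ hd₂ hd
  rw [lamC_eq_exp_logLamC hβ hγ hβγ (hI hd₁), lamC_eq_exp_logLamC hβ hγ hβγ (hI hd₂), exp_lt_exp]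
  exact hanti (hIT hd₂) (hIT hd₁) (xhat_strictAntiOn hβ hγ hβγ (hI hd₁) (hI hd₂) hd)

lemma mapsTo_xhat_Ioo (hβ : 0 < β) (hγ : 0 ≤ γ) (hβγ : β * γ < 1) (hx : x ∈ xDom β γ) :
    MapsTo (xhat β γ) (Ioo (dbar β γ) (xhatInv β γ x)) (xDom β γ ∩ Ioi x) := fun d hd => by
  obtain ⟨hxd, hinv⟩ := xhat_spec hβ hγ hβγ hd.1
  exact ⟨hxd, ((xhatInv_strictAntiOn hγ hβγ).lt_iff_gt hxd hx).1 (hinv.symm ▸ hd.2)⟩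

lemma mapsTo_xhat_Ioi (hβ : 0 < β) (hγ : 0 ≤ γ) (hβγ : β * γ < 1) (hx : x ∈ xDom β γ) :
    MapsTo (xhat β γ) (Ioi (xhatInv β γ x)) (xDom β γ ∩ Iio x) := fun d hd => by
  obtain ⟨hxd, hinv⟩ := xhat_spec hβ hγ hβγ ((dbar_lt_xhatInv hγ hβγ hx).trans hd)
  exact ⟨hxd, ((xhatInv_strictAntiOn hγ hβγ).lt_iff_gt hx hxd).1 (hinv.symm ▸ hd)⟩

end

/-- Monotonicity of `λ_c`: for `β ≤ 1` it is strictly decreasing on `(d̄, ∞)`;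
for `β > 1` there is `d_c > d̄` with `λ_c` strictly decreasing on `(d̄, d_c)` and
strictly increasing on `(d_c, ∞)`, where `d̄ = (1+√(βγ))/(1−√(βγ))`. -/
theorem lamC_monotonicity
    (β γ : ℝ) (hβ : 0 < β) (hγ : 0 ≤ γ) (hβγ : β * γ < 1) :
    (β ≤ 1 → StrictAntiOn (lamC β γ)
      (Set.Ioi ((1 + Real.sqrt (β * γ)) / (1 - Real.sqrt (β * γ))))) ∧
    (1 < β → ∃ dc : ℝ, (1 + Real.sqrt (β * γ)) / (1 - Real.sqrt (β * γ)) < dc ∧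
      StrictAntiOn (lamC β γ)
        (Set.Ioo ((1 + Real.sqrt (β * γ)) / (1 - Real.sqrt (β * γ))) dc) ∧
      StrictMonoOn (lamC β γ) (Set.Ioi dc)) := by
  have hdom : xDom β γ ⊆ Ioi 0 := fun _ hx => hx.1
  refine ⟨fun hβ1 => ?_, fun hβ1 => ?_⟩
  · exact lamC_strictAntiOn_of_logLamC hβ hγ hβγ subset_rfl
      (fun d hd => (xhat_spec hβ hγ hβγ hd).1)
      (logLamC_strictMonoOn hβ hγ hβγ (convex_xDom hγ) isOpen_xDom hdom
        fun x hx => crit_pos hβ1 hγ hβγ hx)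
  obtain ⟨xc, hxc, hzero⟩ := exists_crit_eq_zero hβ1 hγ hβγ
  have hcrit := crit_strictMonoOn hβ1 hγ hβγ
  refine ⟨xhatInv β γ xc, dbar_lt_xhatInv hγ hβγ hxc, ?_, ?_⟩
  · exact lamC_strictAntiOn_of_logLamC hβ hγ hβγ Ioo_subset_Ioi_self
      (mapsTo_xhat_Ioo hβ hγ hβγ hxc)
      (logLamC_strictMonoOn hβ hγ hβγ ((convex_xDom hγ).inter (convex_Ioi xc))
        (isOpen_xDom.inter isOpen_Ioi) (inter_subset_left.trans hdom)
        fun x hx => hzero ▸ hcrit hxc hx.1 hx.2)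
  · exact lamC_strictMonoOn_of_logLamC hβ hγ hβγ
      (fun d hd => (dbar_lt_xhatInv hγ hβγ hxc).trans hd) (mapsTo_xhat_Ioi hβ hγ hβγ hxc)
      (logLamC_strictAntiOn hβ hγ hβγ ((convex_xDom hγ).inter (convex_Iio xc))
        (isOpen_xDom.inter isOpen_Iio) (inter_subset_left.trans hdom)
        fun x hx => hzero ▸ hcrit hx.1 hxc hx.2)
end

section
/- Let β > 0 and γ ≥ 0, let d > 1 be a real number with √(βγ) ≤ (d−1)/(d+1), and let λ ∈ (0, λ_c(d)). If x̄ > 0 satisfies the fixed point equation x̄ = λ·((γx̄+1)/(x̄+β))^d, then x̄ < x̂_d and d(1−βγ)x̄/((γx̄+1)(x̄+β)) < 1. -/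
/-!
Write `F x = x ((x + β)/(γ x + 1))^d`, so that `x̄` being a fixed point means `F x̄ = λ` and
`λ_c(d) = F x̂_d`. When `βγ ≤ 1` the map `F` is monotone on `(0, ∞)`, hence `λ < λ_c(d)` forces
`x̄ < x̂_d`. The second inequality says that `q x = γ x² - A x + β` is positive at `x̄`, where
`A = d(1 - βγ) - 1 - βγ`; and `x̂_d` is the smaller root of `q` (the root of the linear `q` when
`γ = 0`), to the left of which `q` is positive. The hypothesis `√(βγ) ≤ (d-1)/(d+1)` gives
`A ≥ 2√(βγ)`, so the discriminant of `q` is nonnegative and `βγ ≤ 1`.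
-/

open Real Set

/-- The coefficient `A` of the quadratic `γ x² - A x + β` whose smaller root is `xhat`. -/
noncomputable def xhatCoeff (β γ d : ℝ) : ℝ := -1 - β * γ + d * (1 - β * γ)

theorem mul_inv_rpow_eq_of_eq_mul_rpow {x l r d : ℝ} (hr : 0 < r) (h : x = l * r ^ d) :
    x * r⁻¹ ^ d = l := by
  rw [h, inv_rpow hr.le, mul_assoc, mul_inv_cancel₀ (rpow_pos_of_pos hr d).ne', mul_one]

theorem monotoneOn_mul_div_rpow {β γ d : ℝ} (hβ : 0 ≤ β) (hγ : 0 ≤ γ) (hβγ : β * γ ≤ 1)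
    (hd : 0 ≤ d) : MonotoneOn (fun x => x * ((x + β) / (γ * x + 1)) ^ d) (Ioi 0) := by
  intro a (ha : 0 < a) b (hb : 0 < b) hab
  have hfrac : (a + β) / (γ * a + 1) ≤ (b + β) / (γ * b + 1) := by
    rw [div_le_div_iff₀ (by positivity) (by positivity)]
    nlinarith [mul_nonneg (sub_nonneg.2 hab) (sub_nonneg.2 hβγ)]
  exact mul_le_mul hab (rpow_le_rpow (by positivity) hfrac hd) (by positivity) hb.le

theorem quadratic_pos_of_lt_root {a b c r x : ℝ} (ha : 0 ≤ a) (hc : c ≠ 0)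
    (hr : a * r ^ 2 + b * r + c = 0) (hr_le : 2 * a * r ≤ -b) (hx : x < r) :
    0 < a * x ^ 2 + b * x + c := by
  have hq : a * x ^ 2 + b * x + c = (r - x) * (-b - 2 * a * r) + a * (r - x) ^ 2 := by
    linear_combination hr
  rw [hq]
  rcases ha.eq_or_lt with rfl | ha
  · have hb : b < 0 := lt_of_le_of_ne (by linarith) (by rintro rfl; simp_all)
    nlinarith [mul_pos (sub_pos.2 hx) (neg_pos.2 hb)]
  · nlinarith [mul_nonneg (sub_pos.2 hx).le (sub_nonneg.2 hr_le),
      mul_pos ha (pow_pos (sub_pos.2 hx) 2)]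

section xhat

variable {β γ d : ℝ}

theorem two_sqrt_le_xhatCoeff (hβγ₀ : 0 ≤ β * γ) (hd : 1 < d)
    (hβγ : √(β * γ) ≤ (d - 1) / (d + 1)) : 2 * √(β * γ) ≤ xhatCoeff β γ d := by
  have ht : √(β * γ) * (d + 1) ≤ d - 1 := (le_div_iff₀ (by linarith)).1 hβγ
  have hA : xhatCoeff β γ d = d - 1 - √(β * γ) ^ 2 * (d + 1) := by
    rw [xhatCoeff, sq_sqrt hβγ₀]; ring
  -- `A - 2t = (1 + t)(d - 1 - t(d + 1))` for `t = √(βγ)`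
  rw [hA]
  nlinarith [mul_nonneg (by positivity : 0 ≤ 1 + √(β * γ)) (sub_nonneg.2 ht)]

theorem xhat_eq_of_pos (hγ : 0 < γ) : xhat β γ d =
    (xhatCoeff β γ d - √(xhatCoeff β γ d ^ 2 - 4 * (β * γ))) / (2 * γ) := by
  rw [xhat, if_neg hγ.ne', xhatCoeff]

theorem xhat_pos (hβ : 0 < β) (hγ : 0 ≤ γ) (hd : 1 < d)
    (hβγ : √(β * γ) ≤ (d - 1) / (d + 1)) : 0 < xhat β γ d := by
  rcases hγ.eq_or_lt with rfl | hγ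
  · rw [xhat, if_pos rfl]; exact div_pos hβ (by linarith)
  have hA := two_sqrt_le_xhatCoeff (by positivity) hd hβγ
  have hA₀ : 0 < xhatCoeff β γ d := by
    nlinarith [sqrt_pos.2 (mul_pos hβ hγ)]
  rw [xhat_eq_of_pos hγ]
  refine div_pos (sub_pos.2 ((sqrt_lt' hA₀).2 ?_)) (by positivity)
  nlinarith [mul_pos hβ hγ]

theorem xhat_isRoot (hβ : 0 < β) (hγ : 0 ≤ γ) (hd : 1 < d)
    (hβγ : √(β * γ) ≤ (d - 1) / (d + 1)) :
    γ * xhat β γ d ^ 2 + -xhatCoeff β γ d * xhat β γ d + β = 0 := by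
  rcases hγ.eq_or_lt with rfl | hγ
  · rw [xhat, if_pos rfl, xhatCoeff]; field_simp [(by linarith : d - 1 ≠ 0)]; ring
  have hA := two_sqrt_le_xhatCoeff (by positivity) hd hβγ
  have hdisc : discrim γ (-xhatCoeff β γ d) β = √(xhatCoeff β γ d ^ 2 - 4 * (β * γ)) *
      √(xhatCoeff β γ d ^ 2 - 4 * (β * γ)) := by
    rw [mul_self_sqrt (by nlinarith [sq_sqrt (by positivity : 0 ≤ β * γ), sqrt_nonneg (β * γ)]),
      discrim]
    ring
  rw [sq, (quadratic_eq_zero_iff hγ.ne' hdisc _).2 (Or.inr (by rw [xhat_eq_of_pos hγ, neg_neg]))]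

theorem two_mul_mul_xhat_le (hβ : 0 < β) (hγ : 0 ≤ γ) (hd : 1 < d)
    (hβγ : √(β * γ) ≤ (d - 1) / (d + 1)) : 2 * γ * xhat β γ d ≤ xhatCoeff β γ d := by
  have hA := two_sqrt_le_xhatCoeff (by positivity) hd hβγ
  rcases hγ.eq_or_lt with rfl | hγ
  · simpa using hA
  rw [xhat_eq_of_pos hγ, mul_div_cancel₀ _ (by positivity)]
  linarith [sqrt_nonneg (xhatCoeff β γ d ^ 2 - 4 * (β * γ))]

end xhat

theorem fixed_point_lt_xhat_general
    (β γ d : ℝ) (hβ : 0 < β) (hγ : 0 ≤ γ) (hd : 1 < d)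
    (hβγ : Real.sqrt (β * γ) ≤ (d - 1) / (d + 1))
    (lam : ℝ) (hlc : lam < lamC β γ d)
    (xbar : ℝ) (hx : 0 < xbar)
    (hfix : xbar = lam * ((γ * xbar + 1) / (xbar + β)) ^ d) :
    xbar < xhat β γ d ∧
    d * (1 - β * γ) * xbar / ((γ * xbar + 1) * (xbar + β)) < 1 := by
  have hA := two_sqrt_le_xhatCoeff (by positivity) hd hβγ
  have hβγ_le : β * γ ≤ 1 := by
    rw [xhatCoeff] at hA; nlinarith [sqrt_nonneg (β * γ)]
  have hlam : xbar * ((xbar + β) / (γ * xbar + 1)) ^ d = lam := by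
    simpa only [inv_div] using mul_inv_rpow_eq_of_eq_mul_rpow (by positivity) hfix
  have hlt : xbar < xhat β γ d := by
    by_contra! hle
    have hF : lamC β γ d ≤ xbar * ((xbar + β) / (γ * xbar + 1)) ^ d :=
      monotoneOn_mul_div_rpow hβ.le hγ hβγ_le (by linarith : (0 : ℝ) ≤ d)
        (xhat_pos hβ hγ hd hβγ) hx hle
    exact hlc.not_ge (hlam ▸ hF)
  refine ⟨hlt, (div_lt_one (by positivity)).2 ?_⟩
  have hq := quadratic_pos_of_lt_root hγ hβ.ne' (xhat_isRoot hβ hγ hd hβγ)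
    (by simpa using two_mul_mul_xhat_le hβ hγ hd hβγ) hlt
  rw [xhatCoeff] at hq
  linarith

/-- If `λ ∈ (0, λ_c(d))` and `x̄ > 0` is a fixed point of `x ↦ λ((γx+1)/(x+β))^d`,
then `x̄ < x̂_d` and `d(1−βγ)x̄/((γx̄+1)(x̄+β)) < 1`. -/
theorem fixed_point_lt_xhat
    (β γ d : ℝ) (hβ : 0 < β) (hγ : 0 ≤ γ) (hd : 1 < d)
    (hβγ : Real.sqrt (β * γ) ≤ (d - 1) / (d + 1))
    (lam : ℝ) (hl : 0 < lam) (hlc : lam < lamC β γ d)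
    (xbar : ℝ) (hx : 0 < xbar)
    (hfix : xbar = lam * ((γ * xbar + 1) / (xbar + β)) ^ d) :
    xbar < xhat β γ d ∧
    d * (1 - β * γ) * xbar / ((γ * xbar + 1) * (xbar + β)) < 1 :=
  fixed_point_lt_xhat_general β γ d hβ hγ hd hβγ lam hlc xbar hx hfix
end

section
/- Let μ ≥ −1 with μ ≠ 0 and let 0 < k < π/(2·ln(μ+4)). Then the equation k·e^{θ/k}·sin θ + e^{θ/k}·cos θ + μ = 0 has a unique root θ₀ in the interval (0, π]. Moreover, defining r_{k,2}(θ) := (1/2)·ln(1 + μ²e^{−2θ/k} + 2μe^{−θ/k}cos θ): if μ > 0 then r_{k,2} is strictly decreasing on (0, θ₀) and strictly increasing on (θ₀, π); if μ < 0 then r_{k,2} is strictly increasing on (0, θ₀) and strictly decreasing on (θ₀, π). -/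
/-!
Write `G(θ) = k e^{θ/k} sin θ + e^{θ/k} cos θ + μ`. Since `G'(θ) = (k + 1/k) e^{θ/k} cos θ`,
`G` rises on `[0, π/2]` from `G(0) = 1 + μ ≥ 0` and falls on `[π/2, π]` to
`G(π) = μ - e^{π/k}`, which is negative because the bound on `k` gives
`e^{π/k} > (μ + 4)² > μ`. So `G` has exactly one zero `θ₀ ∈ (0, π]`, is positive before it
and negative after it.

Writing `r_{k,2} = ½ log F`, one computes `F' = -(2μ/k) e^{-2θ/k} G`, and
`F = (μ e^{-θ/k} + cos θ)² + sin² θ > 0` on `(0, π)`; so `r_{k,2}'` has the sign of `-μ G`.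
-/

open Real Set

noncomputable section

def critFun (μ k θ : ℝ) : ℝ :=
  k * exp (θ / k) * sin θ + exp (θ / k) * cos θ + μ

def rk2Arg (μ k θ : ℝ) : ℝ :=
  1 + μ ^ 2 * exp (-2 * θ / k) + 2 * μ * exp (-θ / k) * cos θ

def rk2 (μ k θ : ℝ) : ℝ :=
  (1 / 2) * log (rk2Arg μ k θ)

end

section SignChange

variable {f : ℝ → ℝ} {a b c : ℝ}

theorem exists_sign_change_of_strictMonoOn_of_strictAntiOn (hab : a < b) (hbc : b < c)
    (hf : ContinuousOn f (Icc b c)) (hmono : StrictMonoOn f (Icc a b))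
    (hanti : StrictAntiOn f (Icc b c)) (ha : 0 ≤ f a) (hc : f c < 0) :
    ∃ x₀ ∈ Ioo b c, f x₀ = 0 ∧ (∀ x ∈ Ioo a x₀, 0 < f x) ∧ ∀ x ∈ Ioc x₀ c, f x < 0 := by
  have hb : 0 < f b := ha.trans_lt (hmono (left_mem_Icc.2 hab.le) (right_mem_Icc.2 hab.le) hab)
  obtain ⟨x₀, hx₀, hfx₀⟩ := intermediate_value_Ioo' hbc.le hf ⟨hc, hb⟩
  refine ⟨x₀, hx₀, hfx₀, fun x hx => ?_, fun x hx => ?_⟩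
  · rcases le_or_gt x b with hxb | hbx
    · exact ha.trans_lt (hmono (left_mem_Icc.2 hab.le) ⟨hx.1.le, hxb⟩ hx.1)
    · exact hfx₀ ▸
        hanti ⟨hbx.le, hx.2.le.trans hx₀.2.le⟩ (Ioo_subset_Icc_self hx₀) hx.2
  · exact hfx₀ ▸ hanti (Ioo_subset_Icc_self hx₀) ⟨hx₀.1.le.trans hx.1.le, hx.2⟩ hx.1

end SignChange

section CritFun

variable (μ : ℝ) {k : ℝ}

theorem continuous_critFun (k : ℝ) : Continuous (critFun μ k) := by
  unfold critFun; fun_prop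

theorem hasDerivAt_critFun (hk : k ≠ 0) (θ : ℝ) :
    HasDerivAt (critFun μ k) ((k + 1 / k) * exp (θ / k) * cos θ) θ := by
  have he : HasDerivAt (fun t => exp (t / k)) (exp (θ / k) * (1 / k)) θ :=
    ((hasDerivAt_id θ).div_const k).exp
  have H := (((he.const_mul k).mul (hasDerivAt_sin θ)).add
    (he.mul (hasDerivAt_cos θ))).add_const μ
  refine H.congr_deriv ?_
  field_simp
  ring

theorem strictMonoOn_critFun (hk : 0 < k) : StrictMonoOn (critFun μ k) (Icc 0 (π / 2)) := by
  refine strictMonoOn_of_deriv_pos (convex_Icc _ _) (continuous_critFun μ k).continuousOn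
    fun x hx => ?_
  rw [interior_Icc] at hx
  rw [(hasDerivAt_critFun μ hk.ne' x).deriv]
  have : 0 < cos x := cos_pos_of_mem_Ioo ⟨by linarith [hx.1, pi_pos], hx.2⟩
  positivity

theorem strictAntiOn_critFun (hk : 0 < k) : StrictAntiOn (critFun μ k) (Icc (π / 2) π) := by
  refine strictAntiOn_of_deriv_neg (convex_Icc _ _) (continuous_critFun μ k).continuousOn
    fun x hx => ?_
  rw [interior_Icc] at hx
  rw [(hasDerivAt_critFun μ hk.ne' x).deriv]
  exact mul_neg_of_pos_of_neg (by positivity)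
    (cos_neg_of_pi_div_two_lt_of_lt hx.1 (by linarith [hx.2, pi_pos]))

theorem critFun_zero (k : ℝ) : critFun μ k 0 = 1 + μ := by
  simp [critFun]

theorem critFun_pi_neg (hμ : -3 < μ) (hk : 0 < k) (hkπ : k < π / (2 * log (μ + 4))) :
    critFun μ k π < 0 := by
  have hlog : 0 < log (μ + 4) := log_pos (by linarith)
  have hexp : 2 * log (μ + 4) < π / k := by
    rwa [lt_div_iff₀ hk, mul_comm, ← lt_div_iff₀ (by positivity)]
  have hsq : (μ + 4) ^ 2 < exp (π / k) := by
    calc (μ + 4) ^ 2 = exp (2 * log (μ + 4)) := by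
          rw [← log_rpow (by linarith), exp_log (rpow_pos_of_pos (by linarith) _), rpow_two]
      _ < exp (π / k) := exp_lt_exp.2 hexp
  have hμsq : μ < (μ + 4) ^ 2 := by nlinarith [sq_nonneg (μ + 7 / 2)]
  have hval : critFun μ k π = μ - exp (π / k) := by
    simp only [critFun, sin_pi, cos_pi]; ring
  linarith

end CritFun

section Rk2

variable (μ : ℝ) {k : ℝ}

theorem rk2Arg_pos (k : ℝ) {θ : ℝ} (hθ : sin θ ≠ 0) : 0 < rk2Arg μ k θ := by
  have hsq : exp (-2 * θ / k) = exp (-θ / k) ^ 2 := by rw [← exp_nat_mul]; ring_nf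
  have hF : rk2Arg μ k θ = (μ * exp (-θ / k) + cos θ) ^ 2 + sin θ ^ 2 := by
    rw [rk2Arg, hsq]; linear_combination -sin_sq_add_cos_sq θ
  rw [hF]
  positivity

theorem hasDerivAt_rk2 (hk : k ≠ 0) {θ : ℝ} (hF : rk2Arg μ k θ ≠ 0) :
    HasDerivAt (rk2 μ k) (-(μ * critFun μ k θ) * (exp (-2 * θ / k) / (k * rk2Arg μ k θ))) θ := by
  have H1 : HasDerivAt (fun t => exp (-2 * t / k)) (exp (-2 * θ / k) * (-2 * 1 / k)) θ :=
    (((hasDerivAt_id θ).const_mul (-2)).div_const k).exp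
  have H2 : HasDerivAt (fun t => exp (-t / k)) (exp (-θ / k) * (-1 / k)) θ := by
    simpa using ((hasDerivAt_id θ).neg.div_const k).exp
  have HF : HasDerivAt (rk2Arg μ k) (μ ^ 2 * (exp (-2 * θ / k) * (-2 * 1 / k)) +
      (2 * μ * (exp (-θ / k) * (-1 / k)) * cos θ + 2 * μ * exp (-θ / k) * -sin θ)) θ :=
    ((H1.const_mul (μ ^ 2)).const_add 1).add ((H2.const_mul (2 * μ)).mul (hasDerivAt_cos θ))
  refine ((HF.log hF).const_mul (1 / 2 : ℝ)).congr_deriv ?_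
  have hinv : exp (-θ / k) * exp (θ / k) = 1 := by rw [← exp_add]; ring_nf; exact exp_zero
  have hsq : exp (-2 * θ / k) = exp (-θ / k) * exp (-θ / k) := by rw [← exp_add]; ring_nf
  rw [critFun, hsq]
  set B := exp (-θ / k)
  field_simp
  linear_combination μ * B * (cos θ + k * sin θ) * hinv

theorem hasDerivAt_rk2_of_mem_Ioo (hk : 0 < k) {θ : ℝ} (hθ : θ ∈ Ioo 0 π) :
    HasDerivAt (rk2 μ k) (-(μ * critFun μ k θ) * (exp (-2 * θ / k) / (k * rk2Arg μ k θ))) θ :=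
  hasDerivAt_rk2 μ hk.ne' (rk2Arg_pos μ k (sin_pos_of_mem_Ioo hθ).ne').ne'

theorem strictMonoOn_rk2 (hk : 0 < k) {a b : ℝ} (hab : Ioo a b ⊆ Ioo 0 π)
    (hsign : ∀ x ∈ Ioo a b, μ * critFun μ k x < 0) : StrictMonoOn (rk2 μ k) (Ioo a b) := by
  refine strictMonoOn_of_deriv_pos (convex_Ioo a b)
    (fun x hx => (hasDerivAt_rk2_of_mem_Ioo μ hk (hab hx)).continuousAt.continuousWithinAt)
    fun x hx => ?_
  rw [interior_Ioo] at hx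
  rw [(hasDerivAt_rk2_of_mem_Ioo μ hk (hab hx)).deriv]
  have := rk2Arg_pos μ k (sin_pos_of_mem_Ioo (hab hx)).ne'
  exact mul_pos (neg_pos.2 (hsign x hx)) (by positivity)

theorem strictAntiOn_rk2 (hk : 0 < k) {a b : ℝ} (hab : Ioo a b ⊆ Ioo 0 π)
    (hsign : ∀ x ∈ Ioo a b, 0 < μ * critFun μ k x) : StrictAntiOn (rk2 μ k) (Ioo a b) := by
  refine strictAntiOn_of_deriv_neg (convex_Ioo a b)
    (fun x hx => (hasDerivAt_rk2_of_mem_Ioo μ hk (hab hx)).continuousAt.continuousWithinAt)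
    fun x hx => ?_
  rw [interior_Ioo] at hx
  rw [(hasDerivAt_rk2_of_mem_Ioo μ hk (hab hx)).deriv]
  have := rk2Arg_pos μ k (sin_pos_of_mem_Ioo (hab hx)).ne'
  exact mul_neg_of_neg_of_pos (neg_neg_of_pos (hsign x hx)) (by positivity)

end Rk2

theorem r_k2_unique_root_and_monotonicity_general
    (μ k : ℝ) (hμ : -1 ≤ μ) (hk : 0 < k)
    (hkπ : k < Real.pi / (2 * Real.log (μ + 4))) :
    ∃ θ₀ : ℝ, θ₀ ∈ Set.Ioc 0 Real.pi ∧
      k * Real.exp (θ₀ / k) * Real.sin θ₀ + Real.exp (θ₀ / k) * Real.cos θ₀ + μ = 0 ∧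
      (∀ θ ∈ Set.Ioc 0 Real.pi,
        k * Real.exp (θ / k) * Real.sin θ + Real.exp (θ / k) * Real.cos θ + μ = 0 →
        θ = θ₀) ∧
      (0 < μ →
        StrictAntiOn (fun θ : ℝ => (1 / 2) * Real.log
            (1 + μ ^ 2 * Real.exp (-2 * θ / k) + 2 * μ * Real.exp (-θ / k) * Real.cos θ))
          (Set.Ioo 0 θ₀) ∧
        StrictMonoOn (fun θ : ℝ => (1 / 2) * Real.log
            (1 + μ ^ 2 * Real.exp (-2 * θ / k) + 2 * μ * Real.exp (-θ / k) * Real.cos θ))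
          (Set.Ioo θ₀ Real.pi)) ∧
      (μ < 0 →
        StrictMonoOn (fun θ : ℝ => (1 / 2) * Real.log
            (1 + μ ^ 2 * Real.exp (-2 * θ / k) + 2 * μ * Real.exp (-θ / k) * Real.cos θ))
          (Set.Ioo 0 θ₀) ∧
        StrictAntiOn (fun θ : ℝ => (1 / 2) * Real.log
            (1 + μ ^ 2 * Real.exp (-2 * θ / k) + 2 * μ * Real.exp (-θ / k) * Real.cos θ))
          (Set.Ioo θ₀ Real.pi)) := by
  obtain ⟨θ₀, ⟨hθ₀half, hθ₀π⟩, hroot, hpos, hneg⟩ :=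
    exists_sign_change_of_strictMonoOn_of_strictAntiOn (half_pos pi_pos) (half_lt_self pi_pos)
      (continuous_critFun μ k).continuousOn (strictMonoOn_critFun μ hk)
      (strictAntiOn_critFun μ hk) (by rw [critFun_zero]; linarith)
      (critFun_pi_neg μ (by linarith) hk hkπ)
  have hθ₀ : 0 < θ₀ := (half_pos pi_pos).trans hθ₀half
  have hleft : Ioo 0 θ₀ ⊆ Ioo 0 π := Ioo_subset_Ioo_right hθ₀π.le
  have hright : Ioo θ₀ π ⊆ Ioo 0 π := Ioo_subset_Ioo_left hθ₀.le
  refine ⟨θ₀, ⟨hθ₀, hθ₀π.le⟩, hroot, fun θ hθ hθroot => ?_, fun hμpos => ⟨?_, ?_⟩,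
    fun hμneg => ⟨?_, ?_⟩⟩
  · by_contra hne
    rcases lt_or_gt_of_ne hne with h | h
    · exact (hpos θ ⟨hθ.1, h⟩).ne' hθroot
    · exact (hneg θ ⟨h, hθ.2⟩).ne hθroot
  · exact strictAntiOn_rk2 μ hk hleft fun x hx => mul_pos hμpos (hpos x hx)
  · exact strictMonoOn_rk2 μ hk hright fun x hx =>
      mul_neg_of_pos_of_neg hμpos (hneg x (Ioo_subset_Ioc_self hx))
  · exact strictMonoOn_rk2 μ hk hleft fun x hx => mul_neg_of_neg_of_pos hμneg (hpos x hx)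
  · exact strictAntiOn_rk2 μ hk hright fun x hx =>
      mul_pos_of_neg_of_neg hμneg (hneg x (Ioo_subset_Ioc_self hx))

/-- For `μ ≥ −1`, `μ ≠ 0` and `0 < k < π/(2 ln(μ+4))`, the equation
`k e^{θ/k} sin θ + e^{θ/k} cos θ + μ = 0` has a unique root `θ₀ ∈ (0, π]`, and
`r_{k,2}(θ) = (1/2)ln(1 + μ²e^{−2θ/k} + 2μe^{−θ/k}cos θ)` is strictly monotone on
`(0, θ₀)` and `(θ₀, π)` (decreasing then increasing if `μ > 0`, increasing then
decreasing if `μ < 0`). -/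
theorem r_k2_unique_root_and_monotonicity
    (μ k : ℝ) (hμ : -1 ≤ μ) (hμ0 : μ ≠ 0) (hk : 0 < k)
    (hkπ : k < Real.pi / (2 * Real.log (μ + 4))) :
    ∃ θ₀ : ℝ, θ₀ ∈ Set.Ioc 0 Real.pi ∧
      k * Real.exp (θ₀ / k) * Real.sin θ₀ + Real.exp (θ₀ / k) * Real.cos θ₀ + μ = 0 ∧
      (∀ θ ∈ Set.Ioc 0 Real.pi,
        k * Real.exp (θ / k) * Real.sin θ + Real.exp (θ / k) * Real.cos θ + μ = 0 →
        θ = θ₀) ∧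
      (0 < μ →
        StrictAntiOn (fun θ : ℝ => (1 / 2) * Real.log
            (1 + μ ^ 2 * Real.exp (-2 * θ / k) + 2 * μ * Real.exp (-θ / k) * Real.cos θ))
          (Set.Ioo 0 θ₀) ∧
        StrictMonoOn (fun θ : ℝ => (1 / 2) * Real.log
            (1 + μ ^ 2 * Real.exp (-2 * θ / k) + 2 * μ * Real.exp (-θ / k) * Real.cos θ))
          (Set.Ioo θ₀ Real.pi)) ∧
      (μ < 0 →
        StrictMonoOn (fun θ : ℝ => (1 / 2) * Real.log
            (1 + μ ^ 2 * Real.exp (-2 * θ / k) + 2 * μ * Real.exp (-θ / k) * Real.cos θ))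
          (Set.Ioo 0 θ₀) ∧
        StrictAntiOn (fun θ : ℝ => (1 / 2) * Real.log
            (1 + μ ^ 2 * Real.exp (-2 * θ / k) + 2 * μ * Real.exp (-θ / k) * Real.cos θ))
          (Set.Ioo θ₀ Real.pi)) :=
  r_k2_unique_root_and_monotonicity_general μ k hμ hk hkπ
end

section
/- Let μ ≥ −1, let 0 < k < π/(2·ln(μ+4)), and let θ ∈ (0, π]. Then: (i) 1 + μ·e^{−θ/k}·cos θ > 0, and (ii) k·e^{θ/k} + μk·cos θ + μ·sin θ > 0. -/
/-!
With `E = e^{θ/k} > 1`, part (i) is `e^{-θ/k}(E + μ cos θ) > 0`. The only way `E + μ cos θ`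
could fail to be positive with `μ ≥ 0` is `cos θ < 0`, which forces `θ > π/2`; the bound on `k`
then gives `θ/k > log (μ + 4)`, i.e. `E > μ + 4`. For `μ < 0` simply `|μ cos θ| ≤ 1 < E`.

Part (ii) is `k (E + μ cos θ) + μ sin θ`, which settles `μ ≥ 0` since `sin θ ≥ 0` on `(0, π]`.
For `-1 ≤ μ < 0` it is affine in `μ` and positive at both ends `μ = 0` and `μ = -1`, the latter
because `k E > k (1 + θ/k) = k + θ ≥ k cos θ + sin θ`.
-/

open Real

lemma pi_div_two_lt_of_cos_neg {θ : ℝ} (hθ : 0 ≤ θ) (hcos : cos θ < 0) : π / 2 < θ := by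
  by_contra! h
  exact hcos.not_ge (cos_nonneg_of_neg_pi_div_two_le_of_le (by linarith [pi_pos]) h)

lemma add_four_lt_exp_div {μ k θ : ℝ} (hμ : -1 ≤ μ) (hk : 0 < k)
    (hkπ : k < π / (2 * log (μ + 4))) (hθ : π / 2 < θ) : μ + 4 < exp (θ / k) := by
  have hlog : 0 < log (μ + 4) := log_pos (by linarith)
  rw [← log_lt_iff_lt_exp (by linarith), lt_div_iff₀ hk]
  rw [lt_div_iff₀ (by positivity)] at hkπ
  linarith

lemma exp_div_add_mul_cos_pos {μ k θ : ℝ} (hμ : -1 ≤ μ) (hk : 0 < k)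
    (hkπ : k < π / (2 * log (μ + 4))) (hθ : 0 < θ) : 0 < exp (θ / k) + μ * cos θ := by
  have hE : 1 < exp (θ / k) := by
    linarith [add_one_lt_exp (div_pos hθ hk).ne', div_pos hθ hk]
  rcases lt_or_ge μ 0 with hμ0 | hμ0
  · nlinarith [neg_one_le_cos θ, cos_le_one θ]
  rcases lt_or_ge (cos θ) 0 with hcos | hcos
  · have := add_four_lt_exp_div hμ hk hkπ (pi_div_two_lt_of_cos_neg hθ.le hcos)
    nlinarith [neg_one_le_cos θ]
  · positivity

lemma mul_cos_add_sin_lt_mul_exp_div {k θ : ℝ} (hk : 0 < k) (hθ : 0 < θ) :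
    k * cos θ + sin θ < k * exp (θ / k) :=
  calc k * cos θ + sin θ ≤ k * 1 + θ := by gcongr; exacts [cos_le_one θ, sin_le hθ.le]
    _ = k * (θ / k + 1) := by field_simp; ring
    _ < k * exp (θ / k) := by gcongr; exact add_one_lt_exp (div_pos hθ hk).ne'

/-- For `μ ≥ −1`, `0 < k < π/(2 ln(μ+4))` and `θ ∈ (0, π]`:
(i) `1 + μe^{−θ/k}cos θ > 0`, and (ii) `k e^{θ/k} + μk cos θ + μ sin θ > 0`. -/
theorem positivity_technical
    (μ k θ : ℝ) (hμ : -1 ≤ μ) (hk : 0 < k)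
    (hkπ : k < Real.pi / (2 * Real.log (μ + 4)))
    (hθ : θ ∈ Set.Ioc 0 Real.pi) :
    0 < 1 + μ * Real.exp (-θ / k) * Real.cos θ ∧
    0 < k * Real.exp (θ / k) + μ * k * Real.cos θ + μ * Real.sin θ := by
  obtain ⟨hθ0, hθπ⟩ := hθ
  have hpos := exp_div_add_mul_cos_pos hμ hk hkπ hθ0
  constructor
  · have hfactor : 1 + μ * exp (-θ / k) * cos θ = exp (-θ / k) * (exp (θ / k) + μ * cos θ) := by
      rw [mul_add, ← exp_add, neg_div, neg_add_cancel, exp_zero]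
      ring
    rw [hfactor]
    positivity
  · rcases le_or_gt 0 μ with hμ0 | hμ0
    · have hsin := sin_nonneg_of_nonneg_of_le_pi hθ0.le hθπ
      nlinarith [mul_pos hk hpos, mul_nonneg hμ0 hsin]
    · have hlt := mul_cos_add_sin_lt_mul_exp_div hk hθ0
      nlinarith [mul_nonneg (by linarith : (0 : ℝ) ≤ 1 + μ) (mul_pos hk (exp_pos (θ / k))).le,
        mul_pos (neg_pos.mpr hμ0) (sub_pos.mpr hlt)]
end
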